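/- Let n ≥ 1, let V : ℝⁿ → ℝ be smooth, let Φ be a global Hamiltonian flow for V, let t₀, (y₀,η₀), z₀, T × Y × Z and η̂ be as in the central field setting, and let λ ∈ ℝ with action S as in the action setting. Then, possibly after shrinking T × Y × Z around (t₀,y₀,z₀), for all (t,y,z) ∈ T × Y × Z the time derivative of the action satisfies ∂S/∂t(t,y,z) = λ − p(y, η̂(t,y,z)) = λ − p(z, ξ(t,y,η̂(t,y,z))). In particular ∂S/∂t(t,y,z) = 0 if and only if the trajectory through (y, η̂(t,y,z)) has energy λ. -/

import Mathlib

open scoped RealInnerProductSpace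
open Filter Set Topology
open scoped ContDiff

noncomputable section

/-- Euclidean configuration space `ℝⁿ`. -/
abbrev Euc (n : ℕ) := EuclideanSpace ℝ (Fin n)

/-- The Hamiltonian `p(x, ξ) = ½‖ξ‖² + V(x)` on phase space `ℝⁿ × ℝⁿ`. -/
def Ham (n : ℕ) (V : Euc n → ℝ) (z : Euc n × Euc n) : ℝ :=
  (1 / 2) * ‖z.2‖ ^ 2 + V z.1

/-- The Hamiltonian vector field `X_p(x, ξ) = (ξ, −∇V(x))`. -/
def HamVF (n : ℕ) (V : Euc n → ℝ) (z : Euc n × Euc n) : Euc n × Euc n :=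
  (z.2, -gradient V z.1)

/-- `Φ` is a global Hamiltonian flow for the potential `V`: a smooth map
`ℝ × (ℝⁿ × ℝⁿ) → ℝⁿ × ℝⁿ` with `Φ 0 z = z`, `∂ₜΦ(t,z) = X_p(Φ(t,z))` and the
group law `Φ(s+t, z) = Φ(s, Φ(t, z))`. -/
def IsGlobalHamFlow (n : ℕ) (V : Euc n → ℝ)
    (Φ : ℝ → Euc n × Euc n → Euc n × Euc n) : Prop :=
  ContDiff ℝ (⊤ : ℕ∞) (fun q : ℝ × (Euc n × Euc n) => Φ q.1 q.2) ∧
  (∀ z, Φ 0 z = z) ∧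
  (∀ t z, HasDerivAt (fun s => Φ s z) (HamVF n V (Φ t z)) t) ∧
  (∀ s t z, Φ (s + t) z = Φ s (Φ t z))

lemma grad_pair {n : ℕ} {V : Euc n → ℝ} (hV : Differentiable ℝ V) (x a : Euc n) :
    ⟪gradient V x, a⟫ = fderiv ℝ V x a := by
  rw [gradient, InnerProductSpace.toDual_symm_apply]

lemma flow_snd_hasDerivAt {n : ℕ} {V : Euc n → ℝ} {Φ : ℝ → Euc n × Euc n → Euc n × Euc n}
    (hΦ : IsGlobalHamFlow n V Φ) (s : ℝ) (w : Euc n × Euc n) :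
    HasDerivAt (fun s' => (Φ s' w).2) (-gradient V (Φ s w).1) s :=
  (ContinuousLinearMap.snd ℝ (Euc n) (Euc n)).hasFDerivAt.comp_hasDerivAt s (hΦ.2.2.1 s w)

lemma flow_fst_hasDerivAt {n : ℕ} {V : Euc n → ℝ} {Φ : ℝ → Euc n × Euc n → Euc n × Euc n}
    (hΦ : IsGlobalHamFlow n V Φ) (s : ℝ) (w : Euc n × Euc n) :
    HasDerivAt (fun s' => (Φ s' w).1) ((Φ s w).2) s :=
  (ContinuousLinearMap.fst ℝ (Euc n) (Euc n)).hasFDerivAt.comp_hasDerivAt s (hΦ.2.2.1 s w)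

lemma energy_const {n : ℕ} {V : Euc n → ℝ} {Φ : ℝ → Euc n × Euc n → Euc n × Euc n}
    (hV : ContDiff ℝ (⊤ : ℕ∞) V) (hΦ : IsGlobalHamFlow n V Φ) (s : ℝ) (w : Euc n × Euc n) :
    Ham n V (Φ s w) = Ham n V w := by
  have hVd : Differentiable ℝ V := (hV.of_le (by simp) : ContDiff ℝ ∞ V).differentiable (by norm_num)
  have key : ∀ u : ℝ, HasDerivAt (fun s' => Ham n V (Φ s' w)) 0 u := by
    intro u
    have h2 := flow_snd_hasDerivAt hΦ u w
    have h1 := flow_fst_hasDerivAt hΦ u w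
    have hinner : HasDerivAt (fun s' => ⟪(Φ s' w).2, (Φ s' w).2⟫) 
        (⟪(Φ u w).2, -gradient V (Φ u w).1⟫ + ⟪-gradient V (Φ u w).1, (Φ u w).2⟫) u :=
      h2.inner ℝ h2
    have hv : HasDerivAt (fun s' => V (Φ s' w).1) (fderiv ℝ V (Φ u w).1 (Φ u w).2) u :=
      (hVd _).hasFDerivAt.comp_hasDerivAt u h1
    have := ((hinner.const_mul (1/2 : ℝ)).add hv)
    have heq : (fun s' => (1/2 : ℝ) * ⟪(Φ s' w).2, (Φ s' w).2⟫ + V (Φ s' w).1)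
        = fun s' => Ham n V (Φ s' w) := by
      funext s'
      rw [real_inner_self_eq_norm_sq, Ham]
    change HasDerivAt (fun s' => (1/2 : ℝ) * ⟪(Φ s' w).2, (Φ s' w).2⟫ + V (Φ s' w).1) _ u at this
    rw [heq] at this
    convert this using 1
    rw [← grad_pair hVd]
    rw [inner_neg_right, inner_neg_left, real_inner_comm]
    ring
  have h0 : Φ 0 w = w := hΦ.2.1 w
  calc Ham n V (Φ s w) = Ham n V (Φ 0 w) :=
        is_const_of_deriv_eq_zero (f := fun u => Ham n V (Φ u w))
          (fun u => (key u).differentiableAt) (fun u => (key u).deriv) s 0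
    _ = Ham n V w := by rw [h0]

set_option maxHeartbeats 2000000 in
lemma key_hasDerivAt {n : ℕ} {V : Euc n → ℝ} {Φ : ℝ → Euc n × Euc n → Euc n × Euc n}
    (hV : ContDiff ℝ (⊤ : ℕ∞) V) (hΦ : IsGlobalHamFlow n V Φ)
    (lam : ℝ) (y z : Euc n) (ης : ℝ → Euc n) (U : Set ℝ) (hU : IsOpen U)
    (t : ℝ) (htU : t ∈ U) (hsm0 : ContDiffOn ℝ (⊤ : ℕ∞) ης U)
    (hconstr : ∀ u ∈ U, (Φ u (y, ης u)).1 = z) :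
    HasDerivAt (fun u => ∫ s in (0:ℝ)..u,
        ((1/2) * ‖(Φ s (y, ης u)).2‖^2 - V (Φ s (y, ης u)).1 + lam))
      (lam - Ham n V (Φ t (y, ης t))) t := by
  classical
  have hVs : ContDiff ℝ ∞ V := hV.of_le (by simp)
  have hVd : Differentiable ℝ V := hVs.differentiable (by norm_num)
  have hsm : ContDiffOn ℝ ∞ ης U := hsm0.of_le (by simp)
  have hΦs : ContDiff ℝ ∞ (fun q : ℝ × (Euc n × Euc n) => Φ q.1 q.2) := hΦ.1.of_le (by simp)
  set Θ : ℝ × Euc n → Euc n × Euc n := fun p => Φ p.1 (y, p.2) with hΘdef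
  have hΘ : ContDiff ℝ ∞ Θ :=
    hΦs.comp (contDiff_fst.prodMk (contDiff_const.prodMk contDiff_snd))
  have hΘat : ∀ p, HasFDerivAt Θ (fderiv ℝ Θ p) p :=
    fun p => (hΘ.differentiable (by norm_num) p).hasFDerivAt
  set D : ℝ × Euc n → (ℝ × Euc n) →L[ℝ] Euc n × Euc n := fderiv ℝ Θ with hDdef
  have hD : ContDiff ℝ ∞ D := hΘ.fderiv_right (by norm_num)
  have hDs : ∀ p : ℝ × Euc n, D p (1, 0) = HamVF n V (Θ p) := by
    intro p
    have hc : HasDerivAt (fun s : ℝ => ((s, p.2) : ℝ × Euc n)) ((1 : ℝ), (0 : Euc n)) p.1 :=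
      (hasDerivAt_id p.1).prodMk (hasDerivAt_const p.1 p.2)
    have h1 : HasDerivAt (fun s => Θ (s, p.2)) (D p (1, 0)) p.1 :=
      by have := (hΘat p).comp_hasDerivAt p.1 hc; exact this
    exact h1.unique (hΦ.2.2.1 p.1 (y, p.2))
  -- the Lagrangian and its derivative
  set L : Euc n × Euc n → ℝ := fun w => (1/2 : ℝ) * ‖w.2‖^2 - V w.1 + lam with hLdef
  set L' : (Euc n × Euc n) → (Euc n × Euc n) →L[ℝ] ℝ := fun w =>
    ((innerSL ℝ w.2).comp (ContinuousLinearMap.snd ℝ (Euc n) (Euc n))) -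
      ((fderiv ℝ V w.1).comp (ContinuousLinearMap.fst ℝ (Euc n) (Euc n))) with hL'def
  have hL'apply : ∀ w u : Euc n × Euc n, L' w u = ⟪w.2, u.2⟫ - fderiv ℝ V w.1 u.1 := by
    intro w u
    simp only [hL'def, ContinuousLinearMap.coe_sub', Pi.sub_apply,
      ContinuousLinearMap.coe_comp', Function.comp_apply, ContinuousLinearMap.coe_snd',
      ContinuousLinearMap.coe_fst', innerSL_apply_apply]
  have hL : ∀ w, HasFDerivAt L (L' w) w := by
    intro w
    have h2 : HasFDerivAt (fun w : Euc n × Euc n => ⟪w.2, w.2⟫)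
        ((fderivInnerCLM ℝ ((w.2 : Euc n), (w.2 : Euc n))).comp
          ((ContinuousLinearMap.snd ℝ (Euc n) (Euc n)).prod
            (ContinuousLinearMap.snd ℝ (Euc n) (Euc n)))) w :=
      HasFDerivAt.inner ℝ hasFDerivAt_snd hasFDerivAt_snd
    have h3 : HasFDerivAt (fun w : Euc n × Euc n => V w.1)
        ((fderiv ℝ V w.1).comp (ContinuousLinearMap.fst ℝ (Euc n) (Euc n))) w :=
      (hVd w.1).hasFDerivAt.comp w hasFDerivAt_fst
    have h4 := ((h2.const_mul (1/2 : ℝ)).sub h3).add_const lam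
    have hfe : (fun w : Euc n × Euc n => (1/2 : ℝ) * ⟪w.2, w.2⟫ - V w.1 + lam) = L := by
      funext w; rw [hLdef]; rw [real_inner_self_eq_norm_sq]
    change HasFDerivAt (fun w : Euc n × Euc n => (1/2 : ℝ) * ⟪w.2, w.2⟫ - V w.1 + lam) _ w at h4
    rw [hfe] at h4
    have hceq : ((1/2 : ℝ) • ((fderivInnerCLM ℝ ((w.2 : Euc n), (w.2 : Euc n))).comp
          ((ContinuousLinearMap.snd ℝ (Euc n) (Euc n)).prod
            (ContinuousLinearMap.snd ℝ (Euc n) (Euc n)))) -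
          ((fderiv ℝ V w.1).comp (ContinuousLinearMap.fst ℝ (Euc n) (Euc n))))
        = L' w := by
      refine ContinuousLinearMap.ext fun u => ?_
      simp only [hL'def, fderivInnerCLM_apply, ContinuousLinearMap.coe_comp',
        Function.comp_apply, ContinuousLinearMap.smul_apply, ContinuousLinearMap.coe_sub',
        Pi.sub_apply, ContinuousLinearMap.prod_apply, ContinuousLinearMap.coe_snd',
        ContinuousLinearMap.coe_fst', innerSL_apply_apply, smul_eq_mul]
      rw [real_inner_comm u.2 w.2]
      ring
    rwa [hceq] at h4
  have hLsmooth : ContDiff ℝ ∞ L :=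
    ((contDiff_const.mul ((contDiff_norm_sq ℝ).comp contDiff_snd)).sub
      (hVs.comp contDiff_fst)).add contDiff_const
  set Ψ : ℝ × Euc n → ℝ := fun p => L (Θ p) with hΨdef
  have hΨ : ContDiff ℝ ∞ Ψ := hLsmooth.comp hΘ
  have hΨd : Differentiable ℝ Ψ := hΨ.differentiable (by norm_num)
  have hΨfderiv : ∀ p : ℝ × Euc n, fderiv ℝ Ψ p = (L' (Θ p)).comp (D p) :=
    fun p => ((hL (Θ p)).comp p (hΘat p)).fderiv
  -- the curve of initial momenta
  have hςdiff : ∀ u ∈ U, DifferentiableAt ℝ ης u := fun u hu =>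
    (hsm.contDiffAt (hU.mem_nhds hu)).differentiableAt (by norm_num)
  set η : Euc n := ης t with hηdef
  set v : Euc n := deriv ης t with hvdef
  have hvd : HasDerivAt ης v t := (hςdiff t htU).hasDerivAt
  -- parametric integrand
  set F : ℝ → ℝ → ℝ := fun u s => Ψ (s, ης u) with hFdef
  set F' : ℝ → ℝ → ℝ := fun u s => fderiv ℝ Ψ (s, ης u) (0, deriv ης u) with hF'def
  have hFd : ∀ (s : ℝ), ∀ u ∈ U, HasDerivAt (fun u' => F u' s) (F' u s) u := by
    intro s u hu
    have hc : HasDerivAt (fun u' => ((s, ης u') : ℝ × Euc n)) ((0 : ℝ), deriv ης u) u :=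
      (hasDerivAt_const u s).prodMk (hςdiff u hu).hasDerivAt
    exact (hΨd (s, ης u)).hasFDerivAt.comp_hasDerivAt u hc
  have hFcont : ∀ u, Continuous (fun s => F u s) := fun u =>
    hΨ.continuous.comp (continuous_id.prodMk continuous_const)
  have hfderivΨcont : Continuous (fderiv ℝ Ψ) :=
    (hΨ.fderiv_right (m := ∞) (by norm_num)).continuous
  have hderivςcont : ContinuousOn (deriv ης) U :=
    hsm.continuousOn_deriv_of_isOpen hU (by norm_num)
  -- radius and compact time window
  obtain ⟨ε₀, hε₀, hball⟩ := Metric.isOpen_iff.1 hU t htU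
  set ε : ℝ := ε₀ / 2 with hεdef
  have hεpos : 0 < ε := by positivity
  have hcbU : Metric.closedBall t ε ⊆ U :=
    (Metric.closedBall_subset_ball (by rw [hεdef]; linarith)).trans hball
  set J : Set ℝ := Set.Icc (min 0 t - ε) (max 0 t + ε) with hJdef
  have hIJ : Set.uIoc (0:ℝ) t ⊆ J := by
    intro s hs
    rw [Set.uIoc] at hs
    exact ⟨by linarith [hs.1], by linarith [hs.2]⟩
  have hcbJ : Metric.closedBall t ε ⊆ J := by
    intro s hs
    rw [Metric.mem_closedBall, Real.dist_eq, abs_le] at hs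
    have h1 : min 0 t ≤ t := min_le_right 0 t
    have h2 : t ≤ max 0 t := le_max_right 0 t
    exact ⟨by linarith [hs.1], by linarith [hs.2]⟩
  -- uniform bound for F' on a compact neighbourhood
  have hF'contOn : ContinuousOn (fun q : ℝ × ℝ => F' q.1 q.2)
      (Metric.closedBall t ε ×ˢ J) := by
    have hςOn : ContinuousOn (fun q : ℝ × ℝ => ης q.1) (Metric.closedBall t ε ×ˢ J) :=
      hsm.continuousOn.comp continuous_fst.continuousOn (fun q hq => hcbU hq.1)
    have h1 : ContinuousOn (fun q : ℝ × ℝ => fderiv ℝ Ψ (q.2, ης q.1))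
        (Metric.closedBall t ε ×ˢ J) :=
      hfderivΨcont.comp_continuousOn (continuous_snd.continuousOn.prodMk hςOn)
    have h2 : ContinuousOn (fun q : ℝ × ℝ => (((0 : ℝ), deriv ης q.1) : ℝ × Euc n))
        (Metric.closedBall t ε ×ˢ J) :=
      continuousOn_const.prodMk
        (hderivςcont.comp continuous_fst.continuousOn (fun q hq => hcbU hq.1))
    exact h1.clm_apply h2
  have hKc : IsCompact (Metric.closedBall t ε ×ˢ J) :=
    (isCompact_closedBall t ε).prod isCompact_Icc
  obtain ⟨C, hC⟩ := hKc.exists_bound_of_continuousOn hF'contOn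
  have httK : ((t, t) : ℝ × ℝ) ∈ Metric.closedBall t ε ×ˢ J :=
    ⟨Metric.mem_closedBall_self hεpos.le, hcbJ (Metric.mem_closedBall_self hεpos.le)⟩
  have hCnn : (0:ℝ) ≤ C := le_trans (norm_nonneg _) (hC (t, t) httK)
  -- Step 1 : derivative of the fixed-endpoint parametric integral
  have hF'tcont : Continuous fun s => F' t s := by
    rw [hF'def]
    exact (hfderivΨcont.comp (continuous_id.prodMk continuous_const)).clm_apply
      continuous_const
  have step1 := intervalIntegral.hasDerivAt_integral_of_dominated_loc_of_deriv_le
    (μ := MeasureTheory.volume) (F := F) (F' := F') (a := 0) (b := t) (x₀ := t)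
    (bound := fun _ => C) (s := Metric.ball t ε) (Metric.ball_mem_nhds t hεpos)
    (Filter.Eventually.of_forall fun u => (hFcont u).aestronglyMeasurable)
    ((hFcont t).intervalIntegrable 0 t)
    hF'tcont.aestronglyMeasurable
    (MeasureTheory.ae_of_all _ fun s hs u hu =>
      hC (u, s) ⟨Metric.ball_subset_closedBall hu, hIJ hs⟩)
    intervalIntegrable_const
    (MeasureTheory.ae_of_all _ fun s _hs u hu =>
      hFd s u (hcbU (Metric.ball_subset_closedBall hu)))
  obtain ⟨hF'int, H1⟩ := step1
  -- Step 2 : fundamental theorem of calculus for the frozen integrand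
  have H2 : HasDerivAt (fun u => ∫ s in t..u, F t s) (F t t) t :=
    ((hFcont t).integral_hasStrictDerivAt t t).hasDerivAt
  -- Step 3 : the error term has vanishing derivative
  have H3 : HasDerivAt (fun u => ∫ s in t..u, (F u s - F t s)) 0 t := by
    rw [hasDerivAt_iff_isLittleO]
    simp only [intervalIntegral.integral_same, sub_zero, smul_zero, sub_self]
    rw [Asymptotics.isLittleO_iff]
    intro c hc
    have hδpos : 0 < min ε (c / (C + 1)) := lt_min hεpos (by positivity)
    filter_upwards [Metric.ball_mem_nhds t hδpos] with u hu
    have hut : |u - t| < min ε (c / (C + 1)) := by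
      rwa [Metric.mem_ball, Real.dist_eq] at hu
    have huε : u ∈ Metric.ball t ε := by
      rw [Metric.mem_ball, Real.dist_eq]
      exact lt_of_lt_of_le hut (min_le_left _ _)
    have hbd : ∀ s ∈ Set.uIoc t u, ‖F u s - F t s‖ ≤ C * ‖u - t‖ := by
      intro s hs
      have hst : |s - t| ≤ |u - t| := by
        rcases le_total t u with h | h
        · rw [Set.uIoc_of_le h] at hs
          rw [abs_of_nonneg (by linarith [hs.1.le] : (0:ℝ) ≤ s - t),
            abs_of_nonneg (by linarith : (0:ℝ) ≤ u - t)]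
          linarith [hs.2]
        · rw [Set.uIoc_of_ge h] at hs
          rw [abs_of_nonpos (by linarith [hs.2] : s - t ≤ 0),
            abs_of_nonpos (by linarith : u - t ≤ 0)]
          linarith [hs.1.le]
      have hsball : s ∈ Metric.closedBall t ε := by
        rw [Metric.mem_closedBall, Real.dist_eq]
        exact hst.trans (le_of_lt (lt_of_lt_of_le hut (min_le_left _ _)))
      exact Convex.norm_image_sub_le_of_norm_hasDerivWithin_le
        (f := fun u' => F u' s) (f' := fun u' => F' u' s) (C := C) (s := Metric.ball t ε)
        (fun x hx => (hFd s x (hcbU (Metric.ball_subset_closedBall hx))).hasDerivWithinAt)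
        (fun x hx => hC (x, s) ⟨Metric.ball_subset_closedBall hx, hcbJ hsball⟩)
        (convex_ball t ε) (Metric.mem_ball_self hεpos) huε
    have hint := intervalIntegral.norm_integral_le_of_norm_le_const hbd
    calc ‖∫ s in t..u, (F u s - F t s)‖ ≤ C * ‖u - t‖ * |u - t| := hint
      _ ≤ c * ‖u - t‖ := by
          rw [Real.norm_eq_abs]
          have h1 : |u - t| ≤ c / (C + 1) := le_of_lt (lt_of_lt_of_le hut (min_le_right _ _))
          have h2 : C * |u - t| ≤ c := by
            have h3 : C * |u - t| ≤ C * (c / (C + 1)) :=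
              mul_le_mul_of_nonneg_left h1 hCnn
            have h4 : C * (c / (C + 1)) ≤ c := by
              rw [mul_comm, div_mul_eq_mul_div, div_le_iff₀ (by linarith : (0:ℝ) < C + 1)]
              nlinarith
            linarith
          nlinarith [abs_nonneg (u - t)]
  -- Step 4 : assemble the derivative of the moving integral
  have heq : ∀ u, (∫ s in (0:ℝ)..u, F u s)
      = (∫ s in (0:ℝ)..t, F u s)
        + ((∫ s in t..u, F t s) + (∫ s in t..u, (F u s - F t s))) := by
    intro u
    have i1 : IntervalIntegrable (fun s => F u s) MeasureTheory.volume 0 t :=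
      (hFcont u).intervalIntegrable _ _
    have i2 : IntervalIntegrable (fun s => F u s) MeasureTheory.volume t u :=
      (hFcont u).intervalIntegrable _ _
    have i3 : IntervalIntegrable (fun s => F t s) MeasureTheory.volume t u :=
      (hFcont t).intervalIntegrable _ _
    have i4 : IntervalIntegrable (fun s => F u s - F t s) MeasureTheory.volume t u :=
      ((hFcont u).sub (hFcont t)).intervalIntegrable _ _
    rw [← intervalIntegral.integral_add_adjacent_intervals i1 i2]
    congr 1
    rw [← intervalIntegral.integral_add i3 i4]
    congr 1
    funext s
    ring
  have Htot : HasDerivAt (fun u => ∫ s in (0:ℝ)..u, F u s)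
      ((∫ s in (0:ℝ)..t, F' t s) + (F t t + 0)) t := by
    refine (H1.add (H2.add H3)).congr_of_eventuallyEq ?_
    exact Filter.Eventually.of_forall heq
  -- Step 5 : identify the integral of F' t via integration by parts along the flow
  set A : ℝ → Euc n := fun s => (D (s, η) ((0:ℝ), v)).1 with hAdef
  have hF't : ∀ s : ℝ, F' t s = L' (Θ (s, η)) (D (s, η) ((0:ℝ), v)) := by
    intro s
    show fderiv ℝ Ψ (s, ης t) (0, deriv ης t) = _
    rw [hΨfderiv]
    rfl
  have hAd : ∀ s : ℝ, HasDerivAt A ((D (s, η) ((0:ℝ), v)).2) s := by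
    intro s
    have hDd : HasFDerivAt D (fderiv ℝ D (s, η)) (s, η) :=
      (hD.differentiable (by norm_num) (s, η)).hasFDerivAt
    have hc : HasDerivAt (fun s' : ℝ => ((s', η) : ℝ × Euc n)) ((1:ℝ), (0 : Euc n)) s :=
      (hasDerivAt_id s).prodMk (hasDerivAt_const s η)
    have h1 : HasDerivAt (fun s' => D (s', η)) (fderiv ℝ D (s, η) (1, 0)) s :=
      hDd.comp_hasDerivAt s hc
    have h2 : HasDerivAt (fun s' => D (s', η) ((0:ℝ), v))
        (fderiv ℝ D (s, η) (1, 0) ((0:ℝ), v)) s := by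
      have := h1.clm_apply (hasDerivAt_const s (((0:ℝ), v) : ℝ × Euc n))
      simpa using this
    have hsymm : fderiv ℝ D (s, η) (1, 0) ((0:ℝ), v)
        = fderiv ℝ D (s, η) ((0:ℝ), v) (1, 0) :=
      second_derivative_symmetric hΘat hDd _ _
    have h3 := hDd.clm_apply
      (hasFDerivAt_const (((1:ℝ), (0:Euc n)) : ℝ × Euc n) ((s, η) : ℝ × Euc n))
    have h7 := h3.fst
    have hfun1 : (fun p : ℝ × Euc n => (D p (((1:ℝ), (0:Euc n)) : ℝ × Euc n)).1)
        = (fun p => (Θ p).2) := by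
      funext p; rw [hDs p]; rfl
    rw [hfun1] at h7
    have h8 := (hΘat (s, η)).snd
    have h9 := h8.unique h7
    have h10 := DFunLike.congr_fun h9 (((0:ℝ), v) : ℝ × Euc n)
    simp only [ContinuousLinearMap.coe_comp', Function.comp_apply,
      ContinuousLinearMap.coe_snd', ContinuousLinearMap.add_apply,
      ContinuousLinearMap.coe_fst', ContinuousLinearMap.comp_zero,
      ContinuousLinearMap.zero_apply, ContinuousLinearMap.flip_apply, zero_add,
      Prod.fst_add] at h10
    have hA1 : HasDerivAt A ((fderiv ℝ D (s, η) (1, 0) ((0:ℝ), v)).1) s :=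
      (ContinuousLinearMap.fst ℝ (Euc n) (Euc n)).hasFDerivAt.comp_hasDerivAt s h2
    rw [hsymm] at hA1
    rwa [← h10] at hA1
  set g : ℝ → ℝ := fun s => ⟪(Θ (s, η)).2, A s⟫ with hgdef
  have hgd : ∀ s : ℝ, HasDerivAt g (F' t s) s := by
    intro s
    have hξd : HasDerivAt (fun s' => (Θ (s', η)).2) (-gradient V ((Θ (s, η)).1)) s :=
      flow_snd_hasDerivAt hΦ s (y, η)
    have hprod := HasDerivAt.inner ℝ hξd (hAd s)
    have hval : ⟪(Θ (s, η)).2, (D (s, η) ((0:ℝ), v)).2⟫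
        + ⟪-gradient V ((Θ (s, η)).1), A s⟫ = F' t s := by
      rw [hF't s, hL'apply]
      rw [inner_neg_left, ← grad_pair hVd]
      ring
    rw [← hval]
    exact hprod
  have hI : (∫ s in (0:ℝ)..t, F' t s) = g t - g 0 :=
    intervalIntegral.integral_eq_sub_of_hasDerivAt (fun s _ => hgd s) hF'int
  -- g 0 = 0
  have hA0 : A 0 = 0 := by
    have hid : HasFDerivAt (fun w : Euc n => (((0:ℝ), w) : ℝ × Euc n))
        ((0 : Euc n →L[ℝ] ℝ).prod (ContinuousLinearMap.id ℝ (Euc n))) η :=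
      (hasFDerivAt_const (0:ℝ) η).prodMk (hasFDerivAt_id η)
    have hcomp : HasFDerivAt (fun w : Euc n => Θ ((0:ℝ), w))
        ((D ((0:ℝ), η)).comp ((0 : Euc n →L[ℝ] ℝ).prod (ContinuousLinearMap.id ℝ (Euc n)))) η :=
      (hΘat ((0:ℝ), η)).comp η hid
    have hfun2 : (fun w : Euc n => Θ ((0:ℝ), w))
        = (fun w : Euc n => ((y, w) : Euc n × Euc n)) := by
      funext w; exact hΦ.2.1 (y, w)
    rw [hfun2] at hcomp
    have hcomp2 : HasFDerivAt (fun w : Euc n => ((y, w) : Euc n × Euc n))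
        ((0 : Euc n →L[ℝ] Euc n).prod (ContinuousLinearMap.id ℝ (Euc n))) η :=
      (hasFDerivAt_const y η).prodMk (hasFDerivAt_id η)
    have h9 := hcomp.unique hcomp2
    have h10 := DFunLike.congr_fun h9 v
    simp only [ContinuousLinearMap.coe_comp', Function.comp_apply,
      ContinuousLinearMap.prod_apply, ContinuousLinearMap.zero_apply,
      ContinuousLinearMap.coe_id', id_eq] at h10
    show (D ((0:ℝ), η) (((0:ℝ), v) : ℝ × Euc n)).1 = 0
    rw [h10]
  have hg0 : g 0 = 0 := by
    show ⟪(Θ ((0:ℝ), η)).2, A 0⟫ = 0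
    rw [hA0, inner_zero_right]
  -- g t = -‖ξ(t)‖²
  have hconstd : (D ((t:ℝ), η) (((1:ℝ), v) : ℝ × Euc n)).1 = 0 := by
    have hc : HasDerivAt (fun u => ((u, ης u) : ℝ × Euc n)) (((1:ℝ), v) : ℝ × Euc n) t :=
      (hasDerivAt_id t).prodMk hvd
    have h1 : HasDerivAt (fun u => Θ (u, ης u)) (D (t, η) ((1:ℝ), v)) t :=
      by have := (hΘat ((t:ℝ), η)).comp_hasDerivAt t hc; exact this
    have h2 : HasDerivAt (fun u => (Θ (u, ης u)).1) ((D ((t:ℝ), η) ((1:ℝ), v)).1) t :=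
      (ContinuousLinearMap.fst ℝ (Euc n) (Euc n)).hasFDerivAt.comp_hasDerivAt t h1
    have h3 : HasDerivAt (fun u => (Θ (u, ης u)).1) (0 : Euc n) t := by
      have hev : (fun u => (Θ (u, ης u)).1) =ᶠ[𝓝 t] (fun _ => z) :=
        Filter.eventually_of_mem (hU.mem_nhds htU) (fun u hu => hconstr u hu)
      exact (hasDerivAt_const t z).congr_of_eventuallyEq hev
    exact h2.unique h3
  have hAt : A t = -(Θ ((t:ℝ), η)).2 := by
    have hsplit : (((1:ℝ), v) : ℝ × Euc n)
        = (((1:ℝ), (0:Euc n)) : ℝ × Euc n) + (((0:ℝ), v) : ℝ × Euc n) := by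
      simp
    have h1 := hconstd
    rw [hsplit, map_add] at h1
    rw [hDs ((t:ℝ), η)] at h1
    have h2 : (Θ ((t:ℝ), η)).2 + (D ((t:ℝ), η) (((0:ℝ), v) : ℝ × Euc n)).1 = 0 := by
      have := congrArg id h1
      simpa [Prod.fst_add, HamVF] using h1
    show (D ((t:ℝ), η) (((0:ℝ), v) : ℝ × Euc n)).1 = -(Θ ((t:ℝ), η)).2
    exact eq_neg_of_add_eq_zero_right h2
  have hgt : g t = -‖(Θ ((t:ℝ), η)).2‖^2 := by
    show ⟪(Θ ((t:ℝ), η)).2, A t⟫ = _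
    rw [hAt, inner_neg_right, real_inner_self_eq_norm_sq]
  -- final computation
  have hvalue : (∫ s in (0:ℝ)..t, F' t s) + (F t t + 0)
      = lam - Ham n V (Φ t (y, η)) := by
    rw [hI, hgt, hg0]
    have hFtt : F t t = (1/2 : ℝ) * ‖(Θ ((t:ℝ), η)).2‖^2 - V ((Θ ((t:ℝ), η)).1) + lam := rfl
    have hHam : Ham n V (Φ t (y, η))
        = (1/2 : ℝ) * ‖(Θ ((t:ℝ), η)).2‖^2 + V ((Θ ((t:ℝ), η)).1) := rfl
    rw [hFtt, hHam]
    ring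
  rw [hvalue] at Htot
  exact Htot

/-- **Time derivative of the action.**  In the central field and action setting,
possibly after shrinking `T × Y × Z` around `(t₀, y₀, z₀)`, the time derivative of
the action satisfies `∂S/∂t(t,y,z) = λ − p(y, η̂(t,y,z)) = λ − p(z, ξ(t,y,η̂(t,y,z)))`;
in particular it vanishes iff the trajectory through `(y, η̂(t,y,z))` has energy `λ`. -/
theorem action_time_derivative
    (n : ℕ) (hn : 1 ≤ n)
    (V : Euc n → ℝ) (hV : ContDiff ℝ (⊤ : ℕ∞) V)
    (Φ : ℝ → Euc n × Euc n → Euc n × Euc n) (hΦ : IsGlobalHamFlow n V Φ)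
    (t₀ : ℝ) (y₀ η₀ z₀ : Euc n) (hz₀ : z₀ = (Φ t₀ (y₀, η₀)).1)
    (hcf : IsUnit (fderiv ℝ (fun η => (Φ t₀ (y₀, η)).1) η₀))
    (T : Set ℝ) (Y Z : Set (Euc n))
    (hT : IsOpen T) (hY : IsOpen Y) (hZ : IsOpen Z)
    (hconn : IsConnected (T ×ˢ Y ×ˢ Z))
    (ht₀ : t₀ ∈ T) (hy₀ : y₀ ∈ Y) (hz₀mem : z₀ ∈ Z)
    (ηh : ℝ → Euc n → Euc n → Euc n)
    (hηsmooth : ContDiffOn ℝ (⊤ : ℕ∞) (fun q : ℝ × Euc n × Euc n => ηh q.1 q.2.1 q.2.2)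
      (T ×ˢ Y ×ˢ Z))
    (hη₀ : ηh t₀ y₀ z₀ = η₀)
    (hsolve : ∀ t ∈ T, ∀ y ∈ Y, ∀ z ∈ Z, (Φ t (y, ηh t y z)).1 = z)
    (lam : ℝ) (S : ℝ → Euc n → Euc n → ℝ)
    (hS : ∀ t y z, S t y z = ∫ s in (0:ℝ)..t,
      ((1 / 2) * ‖(Φ s (y, ηh t y z)).2‖ ^ 2 - V (Φ s (y, ηh t y z)).1 + lam))
    :
    ∃ (T' : Set ℝ) (Y' Z' : Set (Euc n)),
      IsOpen T' ∧ IsOpen Y' ∧ IsOpen Z' ∧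
      T' ⊆ T ∧ Y' ⊆ Y ∧ Z' ⊆ Z ∧
      t₀ ∈ T' ∧ y₀ ∈ Y' ∧ z₀ ∈ Z' ∧
      ∀ t ∈ T', ∀ y ∈ Y', ∀ z ∈ Z',
        deriv (fun t' => S t' y z) t = lam - Ham n V (y, ηh t y z) ∧
        deriv (fun t' => S t' y z) t = lam - Ham n V (z, (Φ t (y, ηh t y z)).2) ∧
        (deriv (fun t' => S t' y z) t = 0 ↔ Ham n V (y, ηh t y z) = lam) := by
  refine ⟨T, Y, Z, hT, hY, hZ, subset_rfl, subset_rfl, subset_rfl, ht₀, hy₀, hz₀mem, ?_⟩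
  intro t ht y hy z hz
  have hςsm : ContDiffOn ℝ (⊤ : ℕ∞) (fun u => ηh u y z) T := by
    have he : ContDiff ℝ (⊤ : ℕ∞) (fun u : ℝ => ((u, y, z) : ℝ × Euc n × Euc n)) :=
      contDiff_id.prodMk (contDiff_const.prodMk contDiff_const)
    have hmaps : Set.MapsTo (fun u : ℝ => ((u, y, z) : ℝ × Euc n × Euc n)) T
        (T ×ˢ Y ×ˢ Z) := fun u hu => ⟨hu, hy, hz⟩
    exact hηsmooth.comp he.contDiffOn hmaps
  have hconstr : ∀ u ∈ T, (Φ u (y, ηh u y z)).1 = z :=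
    fun u hu => hsolve u hu y hy z hz
  have hkey := key_hasDerivAt hV hΦ lam y z (fun u => ηh u y z) T hT t ht hςsm hconstr
  have hfeq : (fun t' => S t' y z) = (fun u => ∫ s in (0:ℝ)..u,
      ((1 / 2) * ‖(Φ s (y, ηh u y z)).2‖ ^ 2 - V (Φ s (y, ηh u y z)).1 + lam)) :=
    funext fun u => hS u y z
  have hderiv : deriv (fun t' => S t' y z) t = lam - Ham n V (Φ t (y, ηh t y z)) := by
    rw [hfeq]
    exact hkey.deriv
  have hcons : Ham n V (Φ t (y, ηh t y z)) = Ham n V (y, ηh t y z) :=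
    energy_const hV hΦ t (y, ηh t y z)
  have hz' : (Φ t (y, ηh t y z)).1 = z := hsolve t ht y hy z hz
  have hals : Ham n V (Φ t (y, ηh t y z)) = Ham n V (z, (Φ t (y, ηh t y z)).2) := by
    rw [Ham, Ham, hz']
  refine ⟨by rw [hderiv, hcons], by rw [hderiv, hals, ← hals, hals], ?_⟩
  rw [hderiv, hcons]
  constructor <;> intro h <;> linarith
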